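/- Let 𝔤 be a finite-dimensional real semisimple Lie algebra with Killing form κ, U an open connected subset of a finite-dimensional real normed space, ξ : U → 𝔤 a complementary-pair configuration with parabolic bundles f, f̂ and 1-forms β, β̂, and m ∈ ℝ∖{0}; suppose η := β̂/m is closed, so that (f, β̂/m) and (f̂, β/m) form a Darboux pair with parameter m. Define the 2-tensor q on U by q_x(u, v) := (1/m)·κ(β̂_x(u), β_x(v)) (the quadratic form associated to the isothermic map (f, η)). Then: (1) q is symmetric, q_x(u, v) = q_x(v, u); (2) the quadratic form associated to (f̂, β/m), namely (u, v) ↦ (1/m)·κ(β_x(u), β̂_x(v)), equals q; (3) q_x(u, v) = (1/(2m))·κ(𝒩_x(u), 𝒩_x(v)), where 𝒩 := −β − β̂, i.e. q is 1/(2m) times the metric induced via φ = (f, f̂) from the Killing form on the space of complementary pairs. -/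

import Mathlib

open Module

/-- A Lie algebra structure on a real normed space, recorded as a bilinear bracket.
(Using a bracket carried as data avoids typeclass diamonds between the normed and
the Lie-algebraic structure.) -/
structure LieStructure (L : Type*) [NormedAddCommGroup L] [NormedSpace ℝ L] where
  bracket : L →ₗ[ℝ] L →ₗ[ℝ] L
  alternating : ∀ x : L, bracket x x = 0
  jacobi : ∀ x y z : L, bracket x (bracket y z) =
    bracket (bracket x y) z + bracket y (bracket x z)

namespace LieStructure

variable {L : Type*} [NormedAddCommGroup L] [NormedSpace ℝ L] (B : LieStructure L)

/-- The adjoint action `ad x = ⁅x, ·⁆`. -/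
def ad (x : L) : Module.End ℝ L := B.bracket x

/-- The Killing form `κ(x, y) = tr (ad x ∘ ad y)`. -/
noncomputable def killing (x y : L) : ℝ := LinearMap.trace ℝ L (B.ad x * B.ad y)

/-- Semisimplicity, via Cartan's criterion: the Killing form is nondegenerate. -/
def IsSemisimple : Prop := ∀ x : L, (∀ y : L, B.killing x y = 0) → x = 0

/-- A Lie subalgebra: a submodule closed under the bracket. -/
def IsSubalgebra (p : Submodule ℝ L) : Prop :=
  ∀ x ∈ p, ∀ y ∈ p, B.bracket x y ∈ p

/-- The Killing polar `𝔭^⊥`. -/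
noncomputable def polar (p : Submodule ℝ L) : Submodule ℝ L where
  carrier := {x | ∀ y ∈ p, B.killing x y = 0}
  add_mem' := fun {a b} ha hb y hy => by
    have : B.killing (a + b) y = B.killing a y + B.killing b y := by
      simp [killing, ad, map_add, add_mul]
    rw [this, ha y hy, hb y hy, add_zero]
  zero_mem' := fun y hy => by simp [killing, ad, map_zero, zero_mul]
  smul_mem' := fun c a ha y hy => by
    have : B.killing (c • a) y = c * B.killing a y := by
      simp [killing, ad, map_smul, smul_mul_assoc]
    rw [this, ha y hy, mul_zero]

/-- A height-one parabolic subalgebra: a subalgebra whose Killing polar is an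
abelian (hence nilpotent) subalgebra. -/
def IsH1Parabolic (p : Submodule ℝ L) : Prop :=
  B.IsSubalgebra p ∧ ∀ x ∈ B.polar p, ∀ y ∈ B.polar p, B.bracket x y = 0

/-- Complementary pair of height-one parabolic subalgebras:
`𝔤 = 𝔭 ⊕ 𝔮^⊥` and `𝔤 = 𝔮 ⊕ 𝔭^⊥`. -/
noncomputable def ComplPair (p q : Submodule ℝ L) : Prop :=
  IsCompl p (B.polar q) ∧ IsCompl q (B.polar p)

/-- `exp (ad z)`, the finite exponential series of the adjoint action (exhaustive
whenever `ad z` is nilpotent, since then `(ad z)^(dim 𝔤 + 1) = 0`). -/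
noncomputable def expAd [FiniteDimensional ℝ L] (z : L) : Module.End ℝ L :=
  ∑ k ∈ Finset.range (Module.finrank ℝ L + 1), (k.factorial : ℝ)⁻¹ • (B.ad z) ^ k

end LieStructure

namespace LieStructure

variable {L : Type*} [NormedAddCommGroup L] [NormedSpace ℝ L] (B : LieStructure L)
variable {E : Type*} [NormedAddCommGroup E] [NormedSpace ℝ E]

/-- The 1-form `β`, the `𝔤₁`-part of `dξ`: `β_x(u) = ½((ad ξ(x))² + ad ξ(x))(dξ_x(u))`. -/
noncomputable def beta [FiniteDimensional ℝ L] (ξ : E → L) (x : E) : E →L[ℝ] L :=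
  (LinearMap.toContinuousLinearMap
    ((2⁻¹ : ℝ) • ((B.ad (ξ x)) ^ 2 + B.ad (ξ x)))).comp (fderiv ℝ ξ x)

/-- The 1-form `β̂`, the `𝔤₋₁`-part of `dξ`:
`β̂_x(u) = −½((ad ξ(x))² − ad ξ(x))(dξ_x(u))`. -/
noncomputable def betaHat [FiniteDimensional ℝ L] (ξ : E → L) (x : E) : E →L[ℝ] L :=
  (LinearMap.toContinuousLinearMap
    (-((2⁻¹ : ℝ) • ((B.ad (ξ x)) ^ 2 - B.ad (ξ x))))).comp (fderiv ℝ ξ x)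

end LieStructure


/-!
Put `P = ad ξ(x)`. Then `P³ = P`, `P` is skew for the Killing form, and `β = π₊ ∘ dξ`,
`β̂ = -π₋ ∘ dξ` with `π± = ½(P² ± P)`. The two projections are κ-adjoint to each other and
`π₊π₋ = π₋π₊ = 0`, so `κ(β, β) = κ(β̂, β̂) = 0` and `κ(β̂(u), β(v)) = -κ(dξ(u), π₊ dξ(v))`;
since `π₊ - π₋ = P`, this is symmetric in `u, v` as soon as `κ(dξ(u), [ξ, dξ(v)]) = 0`.

Differentiating `β̂` and using the symmetry of `D²ξ` and the Jacobi identity, closedness of `β̂`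
says exactly `3[ξ, [dξ(u), dξ(v)]] = 2[dξ(u), dξ(v)]`. Pairing with `ξ` and using
`κ(ξ, [ξ, ·]) = 0` gives `κ(ξ, [dξ(u), dξ(v)]) = 0`, which by invariance is the condition above.
Parts (2) and (3) follow by expanding the Killing form bilinearly.
-/

section SkewTripotent

variable {R : Type*} [Ring R] {P : R}

lemma sq_mul_sq_of_pow_three_eq_self (h3 : P ^ 3 = P) : P ^ 2 * P ^ 2 = P ^ 2 := by
  rw [← pow_add, pow_succ, h3, pow_two]

lemma sq_sub_self_mul_sq_add_self (h3 : P ^ 3 = P) : (P ^ 2 - P) * (P ^ 2 + P) = 0 := by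
  rw [sub_mul, mul_add, mul_add, sq_mul_sq_of_pow_three_eq_self h3, ← pow_succ, ← pow_succ', h3,
    ← pow_two]
  abel

lemma sq_add_self_mul_sq_sub_self (h3 : P ^ 3 = P) : (P ^ 2 + P) * (P ^ 2 - P) = 0 := by
  rw [add_mul, mul_sub, mul_sub, sq_mul_sq_of_pow_three_eq_self h3, ← pow_succ, ← pow_succ', h3,
    ← pow_two]
  abel

lemma sq_add_self_mul_self (h3 : P ^ 3 = P) : (P ^ 2 + P) * (P ^ 2 + P) = 2 • (P ^ 2 + P) := by
  rw [add_mul, mul_add, mul_add, sq_mul_sq_of_pow_three_eq_self h3, ← pow_succ, ← pow_succ', h3,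
    ← pow_two]
  abel

end SkewTripotent

section SkewAdjoint

open LinearMap (IsAdjointPair)

variable {M : Type*} [AddCommGroup M] [Module ℝ M] {K : LinearMap.BilinForm ℝ M}
  {P : Module.End ℝ M}

lemma isAdjointPair_sq_add_self (hP : IsAdjointPair K K P ⇑(-P)) :
    IsAdjointPair K K ⇑(P ^ 2 + P) ⇑(P ^ 2 - P) := by
  convert (hP.mul hP).add hP using 1 <;> ext <;> simp [pow_two, sub_eq_add_neg]

lemma isAdjointPair_sq_sub_self (hP : IsAdjointPair K K P ⇑(-P)) :
    IsAdjointPair K K ⇑(P ^ 2 - P) ⇑(P ^ 2 + P) := by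
  convert (hP.mul hP).sub hP using 1 <;> ext <;> simp [pow_two, sub_eq_add_neg]

lemma apply_apply_sq_add_self_comm (hP : IsAdjointPair K K P ⇑(-P)) (hK : K.IsSymm) {x y : M}
    (hxy : K x (P y) = 0) : K x ((P ^ 2 + P) y) = K y ((P ^ 2 + P) x) := by
  rw [hK.eq y, isAdjointPair_sq_add_self hP]
  simp [hxy]

variable (hP : IsAdjointPair K K P ⇑(-P)) (h3 : P ^ 3 = P)
include hP h3

lemma apply_sq_add_self_apply_sq_add_self (x y : M) :
    K ((P ^ 2 + P) x) ((P ^ 2 + P) y) = 0 := by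
  rw [isAdjointPair_sq_add_self hP, ← Module.End.mul_apply, sq_sub_self_mul_sq_add_self h3,
    LinearMap.zero_apply, map_zero]

lemma apply_sq_sub_self_apply_sq_sub_self (x y : M) :
    K ((P ^ 2 - P) x) ((P ^ 2 - P) y) = 0 := by
  rw [isAdjointPair_sq_sub_self hP, ← Module.End.mul_apply, sq_add_self_mul_sq_sub_self h3,
    LinearMap.zero_apply, map_zero]

lemma apply_sq_sub_self_apply_sq_add_self (x y : M) :
    K ((P ^ 2 - P) x) ((P ^ 2 + P) y) = 2 * K x ((P ^ 2 + P) y) := by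
  rw [isAdjointPair_sq_sub_self hP, ← Module.End.mul_apply, sq_add_self_mul_self h3,
    LinearMap.smul_apply, map_nsmul, nsmul_eq_mul, Nat.cast_ofNat]

end SkewAdjoint

namespace LieStructure

variable {L : Type*} [NormedAddCommGroup L] [NormedSpace ℝ L] (B : LieStructure L)

lemma bracket_swap (x y : L) : B.bracket y x = -B.bracket x y := by
  have h := B.alternating (x + y)
  simp only [map_add, LinearMap.add_apply, B.alternating, zero_add, add_zero] at h
  exact eq_neg_of_add_eq_zero_left h

lemma ad_bracket (x y : L) : B.ad (B.bracket x y) = B.ad x * B.ad y - B.ad y * B.ad x := by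
  ext w
  simp only [ad, LinearMap.sub_apply, Module.End.mul_apply, B.jacobi x y w, add_sub_cancel_right]

noncomputable def killingForm : LinearMap.BilinForm ℝ L :=
  ((LinearMap.mul ℝ (Module.End ℝ L)).compl₁₂ B.bracket B.bracket).compr₂ (LinearMap.trace ℝ L)

@[simp]
lemma killingForm_apply (x y : L) : B.killingForm x y = B.killing x y := rfl

lemma killing_comm (x y : L) : B.killing x y = B.killing y x :=
  LinearMap.trace_mul_comm ℝ (B.ad x) (B.ad y)

lemma killingForm_isSymm : B.killingForm.IsSymm := ⟨B.killing_comm⟩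

lemma isAdjointPair_ad (z : L) :
    LinearMap.IsAdjointPair B.killingForm B.killingForm (B.ad z) ⇑(-B.ad z) := by
  intro x y
  have hneg : B.ad (-B.bracket z y) = -B.ad (B.bracket z y) := map_neg B.bracket _
  show B.killing (B.bracket z x) y = B.killing x (-B.bracket z y)
  simp only [killing, hneg, ad_bracket, mul_neg, sub_mul, mul_sub, map_sub, map_neg, mul_assoc]
  rw [LinearMap.trace_mul_comm ℝ (B.ad z), mul_assoc]
  abel

lemma killing_self_bracket (z w : L) : B.killing z (B.bracket z w) = 0 := by
  have h := B.isAdjointPair_ad z z w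
  rwa [ad, B.alternating, map_zero, LinearMap.zero_apply, LinearMap.neg_apply, map_neg,
    eq_comm, neg_eq_zero] at h

lemma killing_eq_zero_of_three_smul_bracket {z w : L}
    (h : (3 : ℝ) • B.bracket z w = (2 : ℝ) • w) : B.killing z w = 0 := by
  have h' := congrArg (B.killingForm z) h
  simp only [map_smul, killingForm_apply, killing_self_bracket, smul_eq_mul] at h'
  linarith

lemma killing_bracket_eq_zero_of_three_smul_bracket_bracket {z a b : L}
    (h : (3 : ℝ) • B.bracket z (B.bracket a b) = (2 : ℝ) • B.bracket a b) :
    B.killing a (B.bracket z b) = 0 := by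
  have hz := B.isAdjointPair_ad z a b
  have ha := B.isAdjointPair_ad a z b
  simp only [killingForm_apply, ad, LinearMap.neg_apply, map_neg, B.bracket_swap a z] at hz ha
  rw [B.killing_eq_zero_of_three_smul_bracket h] at ha
  linarith

variable {E : Type*} [NormedAddCommGroup E] [NormedSpace ℝ E] [FiniteDimensional ℝ L]
  {ξ : E → L} {x : E}

lemma beta_apply (u : E) :
    B.beta ξ x u = (2⁻¹ : ℝ) • ((B.ad (ξ x) ^ 2 + B.ad (ξ x)) (fderiv ℝ ξ x u)) := rfl

lemma betaHat_apply (u : E) :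
    B.betaHat ξ x u = -((2⁻¹ : ℝ) • ((B.ad (ξ x) ^ 2 - B.ad (ξ x)) (fderiv ℝ ξ x u))) := rfl

section Grading

variable (h3 : B.ad (ξ x) ^ 3 = B.ad (ξ x))
include h3

lemma killing_beta_beta (u v : E) : B.killing (B.beta ξ x u) (B.beta ξ x v) = 0 := by
  simp only [← killingForm_apply, beta_apply, map_smul, LinearMap.smul_apply,
    apply_sq_add_self_apply_sq_add_self (B.isAdjointPair_ad _) h3, smul_zero]

lemma killing_betaHat_betaHat (u v : E) :
    B.killing (B.betaHat ξ x u) (B.betaHat ξ x v) = 0 := by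
  simp only [← killingForm_apply, betaHat_apply, map_neg, map_smul, LinearMap.neg_apply,
    LinearMap.smul_apply, apply_sq_sub_self_apply_sq_sub_self (B.isAdjointPair_ad _) h3,
    smul_zero, neg_zero]

lemma killing_betaHat_beta (u v : E) :
    B.killing (B.betaHat ξ x u) (B.beta ξ x v) =
      -2⁻¹ * B.killing (fderiv ℝ ξ x u) ((B.ad (ξ x) ^ 2 + B.ad (ξ x)) (fderiv ℝ ξ x v)) := by
  simp only [← killingForm_apply, betaHat_apply, beta_apply, map_neg, map_smul,
    LinearMap.neg_apply, LinearMap.smul_apply,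
    apply_sq_sub_self_apply_sq_add_self (B.isAdjointPair_ad _) h3, smul_eq_mul]
  ring

lemma killing_betaHat_beta_comm {u v : E}
    (huv : B.killing (fderiv ℝ ξ x u) (B.bracket (ξ x) (fderiv ℝ ξ x v)) = 0) :
    B.killing (B.betaHat ξ x u) (B.beta ξ x v) = B.killing (B.betaHat ξ x v) (B.beta ξ x u) := by
  rw [B.killing_betaHat_beta h3, B.killing_betaHat_beta h3, ← killingForm_apply,
    apply_apply_sq_add_self_comm (B.isAdjointPair_ad _) B.killingForm_isSymm huv,
    killingForm_apply]

end Grading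

lemma betaHat_eq_comp (y : E) :
    B.betaHat ξ y = (-(2⁻¹ : ℝ) • ((B.bracket.toContinuousBilinearMap (ξ y)).comp
      (B.bracket.toContinuousBilinearMap (ξ y)) - B.bracket.toContinuousBilinearMap (ξ y))).comp
      (fderiv ℝ ξ y) := by
  ext u
  simp [betaHat_apply, ad, pow_two]

lemma hasFDerivAt_betaHat {ξ'' : E →L[ℝ] E →L[ℝ] L} (hξ₁ : DifferentiableAt ℝ ξ x)
    (hξ₂ : HasFDerivAt (fderiv ℝ ξ) ξ'' x) :
    ∃ D : E →L[ℝ] E →L[ℝ] L, HasFDerivAt (B.betaHat ξ) D x ∧ ∀ u v, D u v =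
      -((2⁻¹ : ℝ) • ((B.ad (ξ x) ^ 2 - B.ad (ξ x)) (ξ'' u v)
        + B.bracket (ξ x) (B.bracket (fderiv ℝ ξ x u) (fderiv ℝ ξ x v))
        + B.bracket (fderiv ℝ ξ x u) (B.bracket (ξ x) (fderiv ℝ ξ x v))
        - B.bracket (fderiv ℝ ξ x u) (fderiv ℝ ξ x v))) := by
  have had := (B.bracket.toContinuousBilinearMap.hasFDerivAt).comp x hξ₁.hasFDerivAt
  have h := (((had.clm_comp had).sub had).const_smul (-(2⁻¹ : ℝ))).clm_comp hξ₂
  refine ⟨_, h.congr_of_eventuallyEq (Filter.Eventually.of_forall B.betaHat_eq_comp),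
    fun u v => ?_⟩
  simp only [Function.comp_apply, Pi.smul_apply, Pi.sub_apply, add_apply, smul_apply, sub_apply,
    ContinuousLinearMap.comp_apply, ContinuousLinearMap.compL_apply, ContinuousLinearMap.flip_apply,
    LinearMap.toContinuousBilinearMap_apply, ad, pow_two, LinearMap.sub_apply, Module.End.mul_apply,
    map_sub, map_smul]
  module

lemma three_smul_bracket_bracket_of_closed {c : ℝ} (hc : c ≠ 0) (hξ : ContDiffAt ℝ 2 ξ x)
    (hclosed : ∀ u v : E, fderiv ℝ (fun y => c • B.betaHat ξ y) x u v =
      fderiv ℝ (fun y => c • B.betaHat ξ y) x v u) (u v : E) :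
    (3 : ℝ) • B.bracket (ξ x) (B.bracket (fderiv ℝ ξ x u) (fderiv ℝ ξ x v)) =
      (2 : ℝ) • B.bracket (fderiv ℝ ξ x u) (fderiv ℝ ξ x v) := by
  obtain ⟨D, hD, hDapply⟩ := B.hasFDerivAt_betaHat (hξ.differentiableAt two_ne_zero)
    ((hξ.fderiv_right one_add_one_eq_two.le).differentiableAt one_ne_zero).hasFDerivAt
  have h := hclosed u v
  rw [(hD.fun_const_smul c).fderiv, smul_apply, smul_apply, smul_apply, smul_apply, hDapply,
    hDapply, hξ.isSymmSndFDerivAt (by simp) u v] at h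
  have h' := smul_right_injective L (by norm_num : (2⁻¹ : ℝ) ≠ 0)
    (neg_injective (smul_right_injective L hc h))
  rw [B.bracket_swap (fderiv ℝ ξ x u), map_neg, B.bracket_swap _ (fderiv ℝ ξ x v)] at h'
  linear_combination (norm := module) h' + B.jacobi (ξ x) (fderiv ℝ ξ x u) (fderiv ℝ ξ x v)

end LieStructure

open LieStructure

theorem darboux_pair_quadratic_form_general
    {L : Type*} [NormedAddCommGroup L] [NormedSpace ℝ L] [FiniteDimensional ℝ L]
    (B : LieStructure L)
    {E : Type*} [NormedAddCommGroup E] [NormedSpace ℝ E]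
    (U : Set E) (hU : IsOpen U)
    (ξ : E → L) (hξ : ContDiffOn ℝ (⊤ : ℕ∞) ξ U)
    (hconf : ∀ x ∈ U, (B.ad (ξ x)) ^ 3 = B.ad (ξ x))
    (m : ℝ) (hm : m ≠ 0)
    -- `η := β̂/m` is closed, so `(f, β̂/m)` and `(f̂, β/m)` form a Darboux pair
    (hclosed : ∀ x ∈ U, ∀ u v : E,
      fderiv ℝ (fun y => m⁻¹ • B.betaHat ξ y) x u v =
      fderiv ℝ (fun y => m⁻¹ • B.betaHat ξ y) x v u) :
    -- (1) symmetry
    (∀ x ∈ U, ∀ u v : E,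
      m⁻¹ * B.killing (B.betaHat ξ x u) (B.beta ξ x v) =
      m⁻¹ * B.killing (B.betaHat ξ x v) (B.beta ξ x u)) ∧
    -- (2) the quadratic form of `(f̂, β/m)` is the same
    (∀ x ∈ U, ∀ u v : E,
      m⁻¹ * B.killing (B.beta ξ x u) (B.betaHat ξ x v) =
      m⁻¹ * B.killing (B.betaHat ξ x u) (B.beta ξ x v)) ∧
    -- (3) `q` is `1/(2m)` times the metric induced from the Killing form of `Z`
    (∀ x ∈ U, ∀ u v : E,
      m⁻¹ * B.killing (B.betaHat ξ x u) (B.beta ξ x v) =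
      (2 * m)⁻¹ * B.killing (-(B.beta ξ x u) - B.betaHat ξ x u)
        (-(B.beta ξ x v) - B.betaHat ξ x v)) := by
  have hcomm : ∀ x ∈ U, ∀ u v : E, B.killing (B.betaHat ξ x u) (B.beta ξ x v) =
      B.killing (B.betaHat ξ x v) (B.beta ξ x u) := fun x hx u v =>
    have hξx : ContDiffAt ℝ 2 ξ x :=
      (hξ.contDiffAt (hU.mem_nhds hx)).of_le (WithTop.coe_le_coe.mpr le_top)
    B.killing_betaHat_beta_comm (hconf x hx)
      (B.killing_bracket_eq_zero_of_three_smul_bracket_bracket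
        (B.three_smul_bracket_bracket_of_closed (inv_ne_zero hm) hξx (hclosed x hx) u v))
  have hswap : ∀ x ∈ U, ∀ u v : E, B.killing (B.beta ξ x u) (B.betaHat ξ x v) =
      B.killing (B.betaHat ξ x u) (B.beta ξ x v) := fun x hx u v => by
    rw [B.killing_comm, hcomm x hx v u]
  refine ⟨fun x hx u v => by rw [hcomm x hx u v], fun x hx u v => by rw [hswap x hx u v],
    fun x hx u v => ?_⟩
  simp only [← killingForm_apply, map_sub, map_neg, LinearMap.sub_apply, LinearMap.neg_apply]
  simp only [killingForm_apply, B.killing_beta_beta (hconf x hx),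
    B.killing_betaHat_betaHat (hconf x hx), hswap x hx]
  ring

/-- **The quadratic form of a Darboux pair.**  With `q_x(u,v) := (1/m)·κ(β̂_x(u), β_x(v))`
the quadratic form of the isothermic map `(f, η = β̂/m)`: (1) `q` is symmetric;
(2) the quadratic form `(u,v) ↦ (1/m)·κ(β_x(u), β̂_x(v))` of `(f̂, β/m)` equals `q`;
(3) `q = (1/2m)·φ*g_Z`, i.e. `q_x(u,v) = (1/2m)·κ(𝒩_x(u), 𝒩_x(v))` for `𝒩 = −β − β̂`. -/
theorem darboux_pair_quadratic_form
    {L : Type*} [NormedAddCommGroup L] [NormedSpace ℝ L] [FiniteDimensional ℝ L]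
    (B : LieStructure L) (hss : B.IsSemisimple)
    {E : Type*} [NormedAddCommGroup E] [NormedSpace ℝ E] [FiniteDimensional ℝ E]
    (U : Set E) (hU : IsOpen U) (hUconn : IsConnected U)
    (ξ : E → L) (hξ : ContDiffOn ℝ (⊤ : ℕ∞) ξ U)
    (hconf : ∀ x ∈ U, (B.ad (ξ x)) ^ 3 = B.ad (ξ x))
    (m : ℝ) (hm : m ≠ 0)
    -- `η := β̂/m` is closed, so `(f, β̂/m)` and `(f̂, β/m)` form a Darboux pair
    (hclosed : ∀ x ∈ U, ∀ u v : E,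
      fderiv ℝ (fun y => m⁻¹ • B.betaHat ξ y) x u v =
      fderiv ℝ (fun y => m⁻¹ • B.betaHat ξ y) x v u) :
    -- (1) symmetry
    (∀ x ∈ U, ∀ u v : E,
      m⁻¹ * B.killing (B.betaHat ξ x u) (B.beta ξ x v) =
      m⁻¹ * B.killing (B.betaHat ξ x v) (B.beta ξ x u)) ∧
    -- (2) the quadratic form of `(f̂, β/m)` is the same
    (∀ x ∈ U, ∀ u v : E,
      m⁻¹ * B.killing (B.beta ξ x u) (B.betaHat ξ x v) =
      m⁻¹ * B.killing (B.betaHat ξ x u) (B.beta ξ x v)) ∧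
    -- (3) `q` is `1/(2m)` times the metric induced from the Killing form of `Z`
    (∀ x ∈ U, ∀ u v : E,
      m⁻¹ * B.killing (B.betaHat ξ x u) (B.beta ξ x v) =
      (2 * m)⁻¹ * B.killing (-(B.beta ξ x u) - B.betaHat ξ x u)
        (-(B.beta ξ x v) - B.betaHat ξ x v)) :=
  darboux_pair_quadratic_form_general B U hU ξ hξ hconf m hm hclosed
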